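/- Let a ∈ ℂ, a ≠ 0. For every M > 0 there exist a constant C > 0 and an integer N such that for all n ≥ N and all z₁, z₂ ∈ ℂ with |z₁| ≤ M/n² and |z₂| ≤ M/n², one has |α_n(z₁) − α_n(z₂) + (z₁ − z₂)·a²/(8n²)| ≤ C·|z₁ − z₂|/n⁴. -/

import Mathlib

/-!
A term of `A_p(n, z)` is the weight of the walk `n → j₁ → ⋯ → j_p → n`; for the Mathieu potential
it vanishes unless every step is `±2`. Hence at most `2 ^ p` tuples contribute, each `j_s ≡ n`
(mod 2), and `p` is odd, so `A₂ = 0`. For `j ≡ n` (mod 2), `j ≠ ±n`, one has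
`|n² - j²| ≥ 4n - 4`, so for `|z| ≤ 1` every denominator is at least `2n`, and
`|A_p(z₁) - A_p(z₂)| ≤ |z₁ - z₂| (2|a|/n)^(p+1)`: the terms `p ≥ 3` contribute
`O(|z₁ - z₂| / n⁴)`. What remains is the explicit `A₁(z) = a²/(4n - 4 + z) - a²/(4n + 4 - z)`,
whose difference quotient on `|z| ≤ M/n²` is `-a²/(8n²) + O(n⁻⁴)`.
-/

open Complex

/-- Extended walk: `extWalk b e k j i` equals `b` for `i = 0`, `j (i-1)` for `1 ≤ i ≤ k`,
and `e` for `i > k`. -/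
def extWalk (b e : ℤ) (k : ℕ) (j : Fin k → ℤ) : ℕ → ℤ := fun i =>
  if h : 1 ≤ i ∧ i ≤ k then j ⟨i - 1, by omega⟩ else if i = 0 then b else e

/-- Generic term of the sums `S_k^{ij}(n,z)`: for a `k`-tuple `j` of integers avoiding `±n`,
the value `V(j₁ - b) V(j₂ - j₁) ⋯ V(j_k - j_{k-1}) V(e - j_k) / ∏_s (n² - j_s² + z)`. -/
noncomputable def Sterm (V : ℤ → ℂ) (n : ℕ) (z : ℂ) (b e : ℤ) (k : ℕ)
    (j : Fin k → {m : ℤ // m ≠ (n : ℤ) ∧ m ≠ -(n : ℤ)}) : ℂ :=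
  (∏ i ∈ Finset.range (k + 1),
      V (extWalk b e k (fun s => (j s : ℤ)) (i + 1) - extWalk b e k (fun s => (j s : ℤ)) i)) /
    ∏ s : Fin k, ((n : ℂ) ^ 2 - ((j s : ℤ) : ℂ) ^ 2 + z)

/-- The Mathieu Fourier coefficients: `V(2) = V(-2) = a` and `V(m) = 0` for `m ≠ ±2`. -/
noncomputable def mathieuV (a : ℂ) : ℤ → ℂ := fun m => if m = 2 ∨ m = -2 then a else 0

/-- `A_p(n,z)` for the Mathieu potential: the sum over `p`-tuples `(j₁,…,j_p)` of integers
avoiding `±n` of `V(-n+j₁) V(j₂-j₁) ⋯ V(j_p-j_{p-1}) V(n-j_p) / ∏_s (n²-j_s²+z)`. -/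
noncomputable def Acoef (a : ℂ) (n : ℕ) (z : ℂ) (p : ℕ) : ℂ :=
  ∑' j : Fin p → {m : ℤ // m ≠ (n : ℤ) ∧ m ≠ -(n : ℤ)},
    Sterm (mathieuV a) n z (n : ℤ) (n : ℤ) p j

/-- `α_n(z) = ∑_{p=1}^∞ A_p(n,z)`. -/
noncomputable def alphaC (a : ℂ) (n : ℕ) (z : ℂ) : ℂ := ∑' p : ℕ, Acoef a n z (p + 1)

open Finset

section Walk

variable {f g : ℕ → ℤ} {m : ℕ}

lemma sub_emod_four_of_steps (hf : ∀ i < m, f (i + 1) - f i = 2 ∨ f (i + 1) - f i = -2) :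
    ∀ i ≤ m, (f i - f 0) % 4 = 2 * i % 4 := by
  intro i
  induction i with
  | zero => simp
  | succ i ih =>
    intro hi
    have := ih (by omega)
    rcases hf i (by omega) with h | h <;> push_cast <;> omega

lemma eq_of_steps (h0 : f 0 = g 0)
    (hf : ∀ i < m, f (i + 1) - f i = 2 ∨ f (i + 1) - f i = -2)
    (hg : ∀ i < m, g (i + 1) - g i = 2 ∨ g (i + 1) - g i = -2)
    (hfg : ∀ i < m, (f (i + 1) = f i + 2 ↔ g (i + 1) = g i + 2)) :
    ∀ i ≤ m, f i = g i := by
  intro i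
  induction i with
  | zero => exact fun _ => h0
  | succ i ih =>
    intro hi
    have := ih (by omega)
    have := hfg i (by omega)
    rcases hf i (by omega) with h | h <;> rcases hg i (by omega) with h' | h' <;> omega

end Walk

section ExtWalk

variable (b e : ℤ) {k : ℕ} (j : Fin k → ℤ)

@[simp] lemma extWalk_zero : extWalk b e k j 0 = b := by
  simp [extWalk]

@[simp] lemma extWalk_succ (s : Fin k) : extWalk b e k j (s + 1) = j s := by
  have h : 1 ≤ (s : ℕ) + 1 ∧ (s : ℕ) + 1 ≤ k := ⟨by omega, s.2⟩
  simp only [extWalk, dif_pos h]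
  exact congrArg j (Fin.ext (by simp))

lemma extWalk_of_lt (i : ℕ) (hi : k < i) : extWalk b e k j i = e := by
  simp only [extWalk]
  rw [dif_neg (by omega), if_neg (by omega)]

end ExtWalk

lemma norm_tsum_le_card_mul_of_injOn {ι κ E : Type*} [Fintype κ] [NormedAddCommGroup E]
    {g : ι → E} {S : Set ι} (φ : ι → κ) (hφ : S.InjOn φ) (hg : ∀ j ∉ S, g j = 0)
    {B : ℝ} (hB0 : 0 ≤ B) (hB : ∀ j ∈ S, ‖g j‖ ≤ B) :
    ‖∑' j, g j‖ ≤ Fintype.card κ * B := by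
  have hS : S.Finite := Set.Finite.of_injOn (Set.mapsTo_univ _ _) hφ Set.finite_univ
  have hcard : #hS.toFinset ≤ Fintype.card κ :=
    Finset.card_le_card_of_injOn φ (fun _ _ => Finset.mem_coe.2 (Finset.mem_univ _))
      (by simpa using hφ)
  rw [tsum_eq_sum (s := hS.toFinset) (fun j hj => hg j (by simpa using hj))]
  calc ‖∑ j ∈ hS.toFinset, g j‖ ≤ ∑ j ∈ hS.toFinset, ‖g j‖ := norm_sum_le _ _
    _ ≤ #hS.toFinset * B := by
      simpa using Finset.sum_le_card_nsmul _ _ B (fun j hj => hB j (by simpa using hj))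
    _ ≤ Fintype.card κ * B := by gcongr

section Numerator

variable {a : ℂ} {b e : ℤ} {k : ℕ} {j : Fin k → ℤ}

noncomputable def mathieuNumer (a : ℂ) (b e : ℤ) (k : ℕ) (j : Fin k → ℤ) : ℂ :=
  ∏ i ∈ range (k + 1), mathieuV a (extWalk b e k j (i + 1) - extWalk b e k j i)

lemma Sterm_mathieuV (n : ℕ) (z : ℂ) (j : Fin k → {m : ℤ // m ≠ (n : ℤ) ∧ m ≠ -(n : ℤ)}) :
    Sterm (mathieuV a) n z b e k j =
      mathieuNumer a b e k (fun s => j s) / ∏ s, ((n : ℂ) ^ 2 - ((j s : ℤ) : ℂ) ^ 2 + z) :=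
  rfl

lemma norm_mathieuV_le (m : ℤ) : ‖mathieuV a m‖ ≤ ‖a‖ := by
  unfold mathieuV
  split_ifs <;> simp

lemma norm_mathieuNumer_le : ‖mathieuNumer a b e k j‖ ≤ ‖a‖ ^ (k + 1) := by
  rw [mathieuNumer, norm_prod]
  calc _ ≤ ∏ _i ∈ range (k + 1), ‖a‖ :=
        prod_le_prod (fun _ _ => norm_nonneg _) (fun _ _ => norm_mathieuV_le _)
    _ = ‖a‖ ^ (k + 1) := by simp

lemma steps_of_mathieuNumer_ne_zero (h : mathieuNumer a b e k j ≠ 0) (i : ℕ) (hi : i < k + 1) :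
    extWalk b e k j (i + 1) - extWalk b e k j i = 2 ∨
      extWalk b e k j (i + 1) - extWalk b e k j i = -2 := by
  by_contra hstep
  exact prod_ne_zero_iff.1 h i (mem_range.2 hi) (if_neg hstep)

lemma two_dvd_sub_of_mathieuNumer_ne_zero (h : mathieuNumer a b e k j ≠ 0) (s : Fin k) :
    2 ∣ j s - b := by
  have := sub_emod_four_of_steps (steps_of_mathieuNumer_ne_zero h) (s + 1) (by omega)
  simp only [extWalk_succ, extWalk_zero] at this
  omega

lemma odd_of_mathieuNumer_ne_zero (h : mathieuNumer a b b k j ≠ 0) : Odd k := by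
  have := sub_emod_four_of_steps (steps_of_mathieuNumer_ne_zero h) (k + 1) le_rfl
  rw [extWalk_of_lt _ _ _ _ (by omega), extWalk_zero] at this
  rw [Nat.odd_iff]
  omega

/-- A walk of nonzero weight is determined by the signs of its first `k` steps, so at most `2 ^ k`
tuples contribute to `A_k`. -/
lemma injOn_signs_of_mathieuNumer_ne_zero {P : ℤ → Prop} :
    {j : Fin k → Subtype P | mathieuNumer a b e k (fun s => j s) ≠ 0}.InjOn
      fun j (s : Fin k) => decide ((j s : ℤ) = extWalk b e k (fun t => j t) s + 2) := by
  intro j hj j' hj' hsigns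
  funext s
  apply Subtype.ext
  simpa using eq_of_steps (m := k) (by simp)
    (fun t ht => steps_of_mathieuNumer_ne_zero hj t (by omega))
    (fun t ht => steps_of_mathieuNumer_ne_zero hj' t (by omega))
    (fun t ht => by
      rw [show t = ((⟨t, ht⟩ : Fin k) : ℕ) from rfl, extWalk_succ, extWalk_succ]
      simpa using congrFun hsigns ⟨t, ht⟩)
    (s + 1) s.2

lemma finite_setOf_mathieuNumer_ne_zero {P : ℤ → Prop} :
    {j : Fin k → Subtype P | mathieuNumer a b e k (fun s => j s) ≠ 0}.Finite :=
  Set.Finite.of_injOn (Set.mapsTo_univ _ _) injOn_signs_of_mathieuNumer_ne_zero Set.finite_univ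

end Numerator

section InverseProducts

variable {𝕜 : Type*} [NormedField 𝕜] {c : ℝ}

lemma norm_inv_le_of_le {x : 𝕜} (hc : 0 < c) (hx : c ≤ ‖x‖) : ‖x⁻¹‖ ≤ c⁻¹ := by
  rw [norm_inv]
  exact inv_anti₀ hc hx

lemma norm_inv_prod_le {k : ℕ} {w : Fin k → 𝕜} (hc : 0 < c) (hw : ∀ s, c ≤ ‖w s‖) :
    ‖(∏ s, w s)⁻¹‖ ≤ (c ^ k)⁻¹ := by
  refine norm_inv_le_of_le (by positivity) ?_
  rw [norm_prod]
  calc c ^ k = ∏ _s : Fin k, c := by simp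
    _ ≤ ∏ s, ‖w s‖ := prod_le_prod (fun _ _ => hc.le) (fun s _ => hw s)

lemma norm_inv_sub_inv_le {x y : 𝕜} (hc : 0 < c) (hx : c ≤ ‖x‖) (hy : c ≤ ‖y‖) :
    ‖x⁻¹ - y⁻¹‖ ≤ ‖x - y‖ / c ^ 2 := by
  have hx0 : x ≠ 0 := norm_pos_iff.1 (hc.trans_le hx)
  have hy0 : y ≠ 0 := norm_pos_iff.1 (hc.trans_le hy)
  rw [inv_sub_inv hx0 hy0, div_eq_mul_inv, norm_mul, norm_sub_rev, mul_inv, div_eq_mul_inv,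
    sq, mul_inv]
  gcongr
  exact norm_mul_le_of_le (norm_inv_le_of_le hc hx) (norm_inv_le_of_le hc hy)

lemma norm_inv_prod_sub_inv_prod_le {d : ℝ} (hc : 0 < c) (hd : 0 ≤ d) :
    ∀ {k : ℕ} {w₁ w₂ : Fin k → 𝕜}, (∀ s, c ≤ ‖w₁ s‖) → (∀ s, c ≤ ‖w₂ s‖) →
      (∀ s, ‖w₁ s - w₂ s‖ ≤ d) → ‖(∏ s, w₁ s)⁻¹ - (∏ s, w₂ s)⁻¹‖ ≤ k * d / c ^ (k + 1)
  | 0, _, _, _, _, _ => by simp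
  | k + 1, w₁, w₂, h₁, h₂, hd' => by
    have htail := norm_inv_prod_sub_inv_prod_le hc hd (fun s => h₁ s.succ) (fun s => h₂ s.succ)
      (fun s => hd' s.succ)
    have hhead := (norm_inv_sub_inv_le hc (h₁ 0) (h₂ 0)).trans
      (div_le_div_of_nonneg_right (hd' 0) (by positivity))
    rw [Fin.prod_univ_succ, Fin.prod_univ_succ, mul_inv, mul_inv]
    calc _ = ‖((w₁ 0)⁻¹ - (w₂ 0)⁻¹) * (∏ s : Fin k, w₁ s.succ)⁻¹
          + (w₂ 0)⁻¹ * ((∏ s : Fin k, w₁ s.succ)⁻¹ - (∏ s : Fin k, w₂ s.succ)⁻¹)‖ := by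
            congr 1; ring
      _ ≤ d / c ^ 2 * (c ^ k)⁻¹ + c⁻¹ * (k * d / c ^ (k + 1)) := by
          refine (norm_add_le _ _).trans (add_le_add ?_ ?_) <;> rw [norm_mul]
          · exact mul_le_mul hhead (norm_inv_prod_le hc fun s => h₁ s.succ) (norm_nonneg _)
              (by positivity)
          · exact mul_le_mul (norm_inv_le_of_le hc (h₂ 0)) htail (norm_nonneg _) (by positivity)
      _ = (k + 1 : ℕ) * d / c ^ (k + 1 + 1) := by
          push_cast
          field_simp
          ring

lemma norm_inv_mul_sub_inv_mul_le {u z₁ z₂ : 𝕜} {δ : ℝ} (hc : 0 < c) (hu : c ≤ ‖u‖) (h₁ : c ≤ ‖u + z₁‖) (h₂ : c ≤ ‖u + z₂‖)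
    (hz₁ : ‖z₁‖ ≤ δ) (hz₂ : ‖z₂‖ ≤ δ) :
    ‖(u * u)⁻¹ - ((u + z₁) * (u + z₂))⁻¹‖ ≤ 2 * δ / c ^ 3 := by
  simpa [Fin.prod_univ_two] using norm_inv_prod_sub_inv_prod_le (k := 2) (w₁ := ![u, u])
    (w₂ := ![u + z₁, u + z₂]) hc ((norm_nonneg _).trans hz₁) (Fin.forall_fin_two.2 ⟨hu, hu⟩)
    (Fin.forall_fin_two.2 ⟨h₁, h₂⟩) (Fin.forall_fin_two.2 ⟨by simpa, by simpa⟩)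

end InverseProducts

lemma four_mul_sub_four_le_abs_sq_sub_sq {n m : ℤ} (h : 2 ∣ m - n) (h₁ : m ≠ n) (h₂ : m ≠ -n) :
    4 * n - 4 ≤ |n ^ 2 - m ^ 2| := by
  have hx : 2 ≤ |n - m| := by rcases abs_cases (n - m) with h' | h' <;> omega
  have hy : 2 ≤ |n + m| := by rcases abs_cases (n + m) with h' | h' <;> omega
  have hxy : 2 * n ≤ |n - m| + |n + m| := by
    have := abs_add_le (n - m) (n + m)
    rw [sub_add_add_cancel, ← two_mul] at this
    exact (le_abs_self _).trans this
  rw [show n ^ 2 - m ^ 2 = (n - m) * (n + m) by ring, abs_mul]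
  nlinarith [mul_nonneg (sub_nonneg.2 hx) (sub_nonneg.2 hy)]

lemma two_mul_le_norm_sq_sub_sq_add {n : ℕ} (hn : 3 ≤ n) {z : ℂ} (hz : ‖z‖ ≤ 1) {m : ℤ}
    (h : 2 ∣ m - n) (h₁ : m ≠ n) (h₂ : m ≠ -n) :
    2 * (n : ℝ) ≤ ‖(n : ℂ) ^ 2 - (m : ℂ) ^ 2 + z‖ := by
  have hsq : ((4 * n - 4 : ℤ) : ℝ) ≤ ‖(n : ℂ) ^ 2 - (m : ℂ) ^ 2‖ := by
    rw [show (n : ℂ) ^ 2 - (m : ℂ) ^ 2 = ((n ^ 2 - m ^ 2 : ℤ) : ℂ) by push_cast; ring,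
      Complex.norm_intCast]
    exact_mod_cast four_mul_sub_four_le_abs_sq_sub_sq h h₁ h₂
  have hn' : (3 : ℝ) ≤ n := by exact_mod_cast hn
  have := norm_sub_norm_le ((n : ℂ) ^ 2 - (m : ℂ) ^ 2) (-z)
  rw [sub_neg_eq_add, norm_neg] at this
  push_cast at hsq
  linarith

section Bounds

variable {a : ℂ} {n k : ℕ} {z z₁ z₂ : ℂ}

lemma Sterm_mathieuV_eq_zero {b e : ℤ} {j : Fin k → {m : ℤ // m ≠ (n : ℤ) ∧ m ≠ -(n : ℤ)}}
    (h : mathieuNumer a b e k (fun s => j s) = 0) : Sterm (mathieuV a) n z b e k j = 0 := by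
  rw [Sterm_mathieuV, h, zero_div]

lemma summable_Sterm_mathieuV (b e : ℤ) : Summable (Sterm (mathieuV a) n z b e k) :=
  summable_of_hasFiniteSupport <| finite_setOf_mathieuNumer_ne_zero.subset
    fun _ hj h => hj (Sterm_mathieuV_eq_zero h)

lemma two_mul_le_norm_den_of_mathieuNumer_ne_zero (hn : 3 ≤ n) (hz : ‖z‖ ≤ 1)
    {j : Fin k → {m : ℤ // m ≠ (n : ℤ) ∧ m ≠ -(n : ℤ)}}
    (h : mathieuNumer a n n k (fun s => j s) ≠ 0) (s : Fin k) :
    2 * (n : ℝ) ≤ ‖(n : ℂ) ^ 2 - ((j s : ℤ) : ℂ) ^ 2 + z‖ :=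
  two_mul_le_norm_sq_sub_sq_add hn hz (two_dvd_sub_of_mathieuNumer_ne_zero h s) (j s).2.1 (j s).2.2

lemma norm_Sterm_mathieuV_le (hn : 3 ≤ n) (hz : ‖z‖ ≤ 1)
    (j : Fin k → {m : ℤ // m ≠ (n : ℤ) ∧ m ≠ -(n : ℤ)}) :
    ‖Sterm (mathieuV a) n z n n k j‖ ≤ ‖a‖ ^ (k + 1) * ((2 * n : ℝ) ^ k)⁻¹ := by
  by_cases h : mathieuNumer a n n k (fun s => j s) = 0
  · rw [Sterm_mathieuV_eq_zero h, norm_zero]; positivity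
  rw [Sterm_mathieuV, div_eq_mul_inv, norm_mul]
  exact mul_le_mul norm_mathieuNumer_le
    (norm_inv_prod_le (by positivity) (two_mul_le_norm_den_of_mathieuNumer_ne_zero hn hz h))
    (norm_nonneg _) (by positivity)

lemma norm_Sterm_mathieuV_sub_le (hn : 3 ≤ n) (hz₁ : ‖z₁‖ ≤ 1) (hz₂ : ‖z₂‖ ≤ 1)
    (j : Fin k → {m : ℤ // m ≠ (n : ℤ) ∧ m ≠ -(n : ℤ)}) :
    ‖Sterm (mathieuV a) n z₁ n n k j - Sterm (mathieuV a) n z₂ n n k j‖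
      ≤ ‖a‖ ^ (k + 1) * (k * ‖z₁ - z₂‖ / (2 * n : ℝ) ^ (k + 1)) := by
  by_cases h : mathieuNumer a n n k (fun s => j s) = 0
  · rw [Sterm_mathieuV_eq_zero h, Sterm_mathieuV_eq_zero h, sub_zero, norm_zero]; positivity
  rw [Sterm_mathieuV, Sterm_mathieuV, div_eq_mul_inv, div_eq_mul_inv, ← mul_sub, norm_mul]
  refine mul_le_mul norm_mathieuNumer_le ?_ (norm_nonneg _) (by positivity)
  exact norm_inv_prod_sub_inv_prod_le (by positivity) (norm_nonneg _)
    (two_mul_le_norm_den_of_mathieuNumer_ne_zero hn hz₁ h)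
    (two_mul_le_norm_den_of_mathieuNumer_ne_zero hn hz₂ h) fun s => by rw [add_sub_add_left_eq_sub]

lemma norm_tsum_le_two_pow_mul {g : (Fin k → {m : ℤ // m ≠ (n : ℤ) ∧ m ≠ -(n : ℤ)}) → ℂ}
    (hg : ∀ j, mathieuNumer a n n k (fun s => j s) = 0 → g j = 0) {B : ℝ} (hB0 : 0 ≤ B)
    (hB : ∀ j, ‖g j‖ ≤ B) : ‖∑' j, g j‖ ≤ 2 ^ k * B := by
  simpa using norm_tsum_le_card_mul_of_injOn _ injOn_signs_of_mathieuNumer_ne_zero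
    (fun j hj => hg j (not_not.1 hj)) hB0 (fun j _ => hB j)

lemma norm_Acoef_le (hn : 3 ≤ n) (hz : ‖z‖ ≤ 1) (k : ℕ) :
    ‖Acoef a n z k‖ ≤ ‖a‖ * (‖a‖ / n) ^ k := by
  refine (norm_tsum_le_two_pow_mul (fun j => Sterm_mathieuV_eq_zero) (by positivity)
    (norm_Sterm_mathieuV_le hn hz)).trans_eq ?_
  have hn0 : (n : ℝ) ≠ 0 := by exact_mod_cast (by omega : n ≠ 0)
  rw [mul_pow, div_pow]
  field_simp
  ring

lemma norm_Acoef_sub_le (hn : 3 ≤ n) (hz₁ : ‖z₁‖ ≤ 1) (hz₂ : ‖z₂‖ ≤ 1) (k : ℕ) :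
    ‖Acoef a n z₁ k - Acoef a n z₂ k‖ ≤ ‖z₁ - z₂‖ * (2 * ‖a‖ / n) ^ (k + 1) := by
  rw [Acoef, Acoef, ← (summable_Sterm_mathieuV _ _).tsum_sub (summable_Sterm_mathieuV _ _)]
  refine (norm_tsum_le_two_pow_mul (fun j h => by rw [Sterm_mathieuV_eq_zero h,
    Sterm_mathieuV_eq_zero h, sub_zero]) (by positivity)
    (norm_Sterm_mathieuV_sub_le hn hz₁ hz₂)).trans ?_
  have hn0 : (n : ℝ) ≠ 0 := by exact_mod_cast (by omega : n ≠ 0)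
  have hk : (k : ℝ) / 2 ≤ 2 ^ (k + 1) := by
    have : (k : ℝ) < 2 ^ k := by exact_mod_cast Nat.lt_two_pow_self
    rw [pow_succ]
    linarith [pow_pos (two_pos (α := ℝ)) k]
  calc _ = (k / 2 : ℝ) * (‖z₁ - z₂‖ * (‖a‖ / n) ^ (k + 1)) := by
        rw [mul_pow, div_pow]
        field_simp
        ring
    _ ≤ 2 ^ (k + 1) * (‖z₁ - z₂‖ * (‖a‖ / n) ^ (k + 1)) := by gcongr
    _ = _ := by ring

lemma Acoef_eq_zero_of_even (hk : Even k) : Acoef a n z k = 0 := by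
  refine (tsum_congr fun j => Sterm_mathieuV_eq_zero ?_).trans tsum_zero
  by_contra h
  exact Nat.not_even_iff_odd.2 (odd_of_mathieuNumer_ne_zero h) hk

end Bounds

section FirstCoefficient

variable {a : ℂ} {n : ℕ} {z z₁ z₂ : ℂ}

lemma mathieuV_neg (m : ℤ) : mathieuV a (-m) = mathieuV a m := by
  simp only [mathieuV]
  split_ifs <;> first | rfl | omega

lemma Acoef_one_eq_tsum :
    Acoef a n z 1 = ∑' m : {m : ℤ // m ≠ (n : ℤ) ∧ m ≠ -(n : ℤ)},
      mathieuV a (m - n) ^ 2 / ((n : ℂ) ^ 2 - ((m : ℤ) : ℂ) ^ 2 + z) := by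
  rw [Acoef, ← (Equiv.funUnique (Fin 1) {m : ℤ // m ≠ (n : ℤ) ∧ m ≠ -(n : ℤ)}).tsum_eq
    fun m => mathieuV a (m - n) ^ 2 / ((n : ℂ) ^ 2 - ((m : ℤ) : ℂ) ^ 2 + z)]
  refine tsum_congr fun j => ?_
  have h₁ : extWalk n n 1 (fun s => (j s : ℤ)) (0 + 1) = j 0 := extWalk_succ _ _ _ 0
  have h₂ : extWalk n n 1 (fun s => (j s : ℤ)) (1 + 1) = n := extWalk_of_lt _ _ _ 2 (by omega)
  rw [Sterm_mathieuV, mathieuNumer, prod_range_succ, prod_range_one, Fin.prod_univ_one,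
    extWalk_zero, h₂, h₁, ← neg_sub (j 0 : ℤ), mathieuV_neg, ← sq]
  rfl

lemma Acoef_one (hn : 3 ≤ n) :
    Acoef a n z 1 = a ^ 2 / ((n : ℂ) ^ 2 - ((n - 2 : ℤ) : ℂ) ^ 2 + z)
      + a ^ 2 / ((n : ℂ) ^ 2 - ((n + 2 : ℤ) : ℂ) ^ 2 + z) := by
  set lo : {m : ℤ // m ≠ (n : ℤ) ∧ m ≠ -(n : ℤ)} := ⟨n - 2, by omega⟩
  set hi : {m : ℤ // m ≠ (n : ℤ) ∧ m ≠ -(n : ℤ)} := ⟨n + 2, by omega⟩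
  have hlohi : lo ≠ hi := fun h => by
    have := congrArg Subtype.val h
    simp only [lo, hi] at this
    omega
  rw [Acoef_one_eq_tsum, tsum_eq_sum (s := {lo, hi}), sum_pair hlohi]
  · simp [lo, hi, mathieuV]
  intro m hm
  have : mathieuV a (m - n) = 0 := by
    refine if_neg fun h => hm ?_
    rcases h with h | h
    · simp [show m = hi from Subtype.ext (by simp only [hi]; omega)]
    · simp [show m = lo from Subtype.ext (by simp only [lo]; omega)]
  rw [this, zero_pow two_ne_zero, zero_div]

/-- `A₁'(0) = -a² ((u u)⁻¹ + (v v)⁻¹)` for the two denominators `u = 4n - 4`, `v = -4n - 4`,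
so this says `A₁'(0) = -a² / (8n²) + O(n⁻⁴)`. -/
lemma norm_inv_eight_mul_sq_sub_le (hn : 3 ≤ n) :
    ‖(8 * (n : ℂ) ^ 2)⁻¹
      - (((n : ℂ) ^ 2 - ((n - 2 : ℤ) : ℂ) ^ 2) * ((n : ℂ) ^ 2 - ((n - 2 : ℤ) : ℂ) ^ 2))⁻¹
      - (((n : ℂ) ^ 2 - ((n + 2 : ℤ) : ℂ) ^ 2) * ((n : ℂ) ^ 2 - ((n + 2 : ℤ) : ℂ) ^ 2))⁻¹‖
      ≤ 1 / n ^ 4 := by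
  have hn' : (3 : ℝ) ≤ n := by exact_mod_cast hn
  have hn₀ : (n : ℂ) ≠ 0 := by exact_mod_cast (by omega : n ≠ 0)
  have hn₁ : (n : ℂ) - 1 ≠ 0 := sub_ne_zero.2 (by exact_mod_cast (by omega : n ≠ 1))
  have hn₂ : (n : ℂ) + 1 ≠ 0 := by exact_mod_cast (by omega : n + 1 ≠ 0)
  have e : (8 * (n : ℂ) ^ 2)⁻¹
      - (((n : ℂ) ^ 2 - ((n - 2 : ℤ) : ℂ) ^ 2) * ((n : ℂ) ^ 2 - ((n - 2 : ℤ) : ℂ) ^ 2))⁻¹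
      - (((n : ℂ) ^ 2 - ((n + 2 : ℤ) : ℂ) ^ 2) * ((n : ℂ) ^ 2 - ((n + 2 : ℤ) : ℂ) ^ 2))⁻¹
      = ((-(3 * n ^ 2 - 1) / (8 * n ^ 2 * ((n - 1) * (n + 1)) ^ 2) : ℝ) : ℂ) := by
    rw [show (n : ℂ) ^ 2 - ((n - 2 : ℤ) : ℂ) ^ 2 = 4 * ((n : ℂ) - 1) by push_cast; ring,
      show (n : ℂ) ^ 2 - ((n + 2 : ℤ) : ℂ) ^ 2 = -4 * ((n : ℂ) + 1) by push_cast; ring]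
    push_cast
    field_simp
    ring
  have hden : (0 : ℝ) < 8 * n ^ 2 * ((n - 1) * (n + 1)) ^ 2 :=
    mul_pos (by positivity) (pow_pos (mul_pos (by linarith) (by linarith)) 2)
  rw [e, Complex.norm_real, Real.norm_eq_abs, abs_div, abs_neg, abs_of_pos (by nlinarith),
    abs_of_pos hden, div_le_div_iff₀ hden (by positivity)]
  nlinarith [pow_le_pow_left₀ (by positivity) hn' 2]

lemma norm_Acoef_one_sub_add_le (hn : 3 ≤ n) {δ : ℝ} (hδ : δ ≤ 1) (hz₁ : ‖z₁‖ ≤ δ)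
    (hz₂ : ‖z₂‖ ≤ δ) :
    ‖Acoef a n z₁ 1 - Acoef a n z₂ 1 + (z₁ - z₂) * a ^ 2 / (8 * (n : ℂ) ^ 2)‖
      ≤ ‖a‖ ^ 2 * ‖z₁ - z₂‖ * (1 / n ^ 4 + δ / n ^ 3) := by
  have hδ₀ : 0 ≤ δ := (norm_nonneg _).trans hz₁
  have hn₀ : (0 : ℝ) < 2 * n := by positivity
  have hden {z : ℂ} (hz : ‖z‖ ≤ δ) {m : ℤ} (hm : m = n - 2 ∨ m = n + 2) :
      2 * (n : ℝ) ≤ ‖(n : ℂ) ^ 2 - (m : ℂ) ^ 2 + z‖ :=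
    two_mul_le_norm_sq_sub_sq_add hn (hz.trans hδ) (by omega) (by omega) (by omega)
  have hden₀ {m : ℤ} (hm : m = n - 2 ∨ m = n + 2) :
      2 * (n : ℝ) ≤ ‖(n : ℂ) ^ 2 - (m : ℂ) ^ 2‖ := by
    simpa using hden (z := 0) (by simpa using hδ₀) hm
  set u : ℂ := (n : ℂ) ^ 2 - ((n - 2 : ℤ) : ℂ) ^ 2
  set v : ℂ := (n : ℂ) ^ 2 - ((n + 2 : ℤ) : ℂ) ^ 2
  have hu₀ := hden₀ (.inl rfl)
  have hu₁ := hden hz₁ (.inl rfl)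
  have hu₂ := hden hz₂ (.inl rfl)
  have hv₀ := hden₀ (.inr rfl)
  have hv₁ := hden hz₁ (.inr rfl)
  have hv₂ := hden hz₂ (.inr rfl)
  have key : Acoef a n z₁ 1 - Acoef a n z₂ 1 + (z₁ - z₂) * a ^ 2 / (8 * (n : ℂ) ^ 2)
      = a ^ 2 * (z₁ - z₂) * (((8 * (n : ℂ) ^ 2)⁻¹ - (u * u)⁻¹ - (v * v)⁻¹)
        + ((u * u)⁻¹ - ((u + z₁) * (u + z₂))⁻¹) + ((v * v)⁻¹ - ((v + z₁) * (v + z₂))⁻¹)) := by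
    have hsub {w : ℂ} (h₁ : 2 * (n : ℝ) ≤ ‖w + z₁‖) (h₂ : 2 * (n : ℝ) ≤ ‖w + z₂‖) :
        a ^ 2 / (w + z₁) - a ^ 2 / (w + z₂) = -a ^ 2 * (z₁ - z₂) * ((w + z₁) * (w + z₂))⁻¹ := by
      rw [div_sub_div _ _ (norm_pos_iff.1 (hn₀.trans_le h₁)) (norm_pos_iff.1 (hn₀.trans_le h₂)),
        div_eq_mul_inv]
      ring
    rw [Acoef_one hn, Acoef_one hn]
    linear_combination hsub hu₁ hu₂ + hsub hv₁ hv₂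
  rw [key, norm_mul, norm_mul, norm_pow]
  gcongr
  calc _ ≤ _ := norm_add₃_le
    _ ≤ 1 / n ^ 4 + 2 * δ / (2 * n) ^ 3 + 2 * δ / (2 * n) ^ 3 := by
        gcongr
        · exact norm_inv_eight_mul_sq_sub_le hn
        · exact norm_inv_mul_sub_inv_mul_le hn₀ hu₀ hu₁ hu₂ hz₁ hz₂
        · exact norm_inv_mul_sub_inv_mul_le hn₀ hv₀ hv₁ hv₂ hz₁ hz₂
    _ ≤ 1 / n ^ 4 + δ / n ^ 3 := by
        have : 2 * δ / (2 * n) ^ 3 + 2 * δ / (2 * n) ^ 3 = δ / n ^ 3 / 2 := by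
          field_simp
          ring
        linarith [div_nonneg hδ₀ (pow_nonneg (Nat.cast_nonneg (α := ℝ) n) 3)]

end FirstCoefficient

section Series

variable {a : ℂ} {n : ℕ} {z z₁ z₂ : ℂ}

lemma summable_Acoef (hn : 3 ≤ n) (ha : 4 * ‖a‖ ≤ n) (hz : ‖z‖ ≤ 1) :
    Summable (Acoef a n z) := by
  have hn' : (3 : ℝ) ≤ n := by exact_mod_cast hn
  have hρ : ‖a‖ / n < 1 := by
    rw [div_lt_one (by positivity)]
    linarith [norm_nonneg a]
  exact .of_norm_bounded ((summable_geometric_of_lt_one (by positivity) hρ).mul_left ‖a‖)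
    (norm_Acoef_le hn hz)

lemma alphaC_eq_Acoef_one_add_tsum (hn : 3 ≤ n) (ha : 4 * ‖a‖ ≤ n) (hz : ‖z‖ ≤ 1) :
    alphaC a n z = Acoef a n z 1 + ∑' p, Acoef a n z (p + 3) := by
  rw [alphaC, ← ((summable_nat_add_iff 1).2 (summable_Acoef hn ha hz)).sum_add_tsum_nat_add 2]
  simp [sum_range_succ, Acoef_eq_zero_of_even (even_two)]

lemma norm_tsum_Acoef_sub_le (hn : 3 ≤ n) (ha : 4 * ‖a‖ ≤ n) (hz₁ : ‖z₁‖ ≤ 1) (hz₂ : ‖z₂‖ ≤ 1) :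
    ‖∑' p, Acoef a n z₁ (p + 3) - ∑' p, Acoef a n z₂ (p + 3)‖
      ≤ 32 * ‖a‖ ^ 4 * ‖z₁ - z₂‖ / n ^ 4 := by
  set ρ := 2 * ‖a‖ / n
  have hn₀ : (0 : ℝ) < n := by exact_mod_cast (by omega : 0 < n)
  have hρ : ρ ≤ 1 / 2 := by
    rw [div_le_iff₀ hn₀]
    linarith
  have hsum (z : ℂ) (hz : ‖z‖ ≤ 1) : Summable fun p => Acoef a n z (p + 3) :=
    (summable_nat_add_iff 3).2 (summable_Acoef hn ha hz)
  rw [← (hsum z₁ hz₁).tsum_sub (hsum z₂ hz₂)]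
  calc _ ≤ ‖z₁ - z₂‖ * ρ ^ 4 * (1 - ρ)⁻¹ :=
        tsum_of_norm_bounded ((hasSum_geometric_of_lt_one (by positivity) (by linarith)).mul_left _)
          fun p => (norm_Acoef_sub_le hn hz₁ hz₂ _).trans_eq (by ring)
    _ ≤ ‖z₁ - z₂‖ * ρ ^ 4 * 2 := by
        gcongr
        rw [inv_le_comm₀ (by linarith) two_pos]
        linarith
    _ = 32 * ‖a‖ ^ 4 * ‖z₁ - z₂‖ / n ^ 4 := by
        simp only [ρ, div_pow, mul_pow]
        field_simp
        ring

end Series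

/-- For every `M > 0` there are `C > 0` and `N` such that for all `n ≥ N` and all
`z₁, z₂` with `|z₁|, |z₂| ≤ M/n²`,
`|α_n(z₁) - α_n(z₂) + (z₁ - z₂) a²/(8n²)| ≤ C |z₁ - z₂| / n⁴`. -/
theorem mathieu_stmt_18 (a : ℂ) (ha : a ≠ 0) (M : ℝ) (hM : 0 < M) :
    ∃ C > (0 : ℝ), ∃ N : ℕ, ∀ n ≥ N, ∀ z₁ z₂ : ℂ,
      ‖z₁‖ ≤ M / (n : ℝ) ^ 2 → ‖z₂‖ ≤ M / (n : ℝ) ^ 2 →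
      ‖alphaC a n z₁ - alphaC a n z₂ + (z₁ - z₂) * a ^ 2 / (8 * (n : ℂ) ^ 2)‖
        ≤ C * ‖z₁ - z₂‖ / (n : ℝ) ^ 4 := by
  have ha₀ : 0 < ‖a‖ := norm_pos_iff.2 ha
  refine ⟨‖a‖ ^ 2 * (1 + M + 32 * ‖a‖ ^ 2), by positivity, ⌈M + 4 * ‖a‖⌉₊ + 3, ?_⟩
  intro n hn z₁ z₂ hz₁ hz₂
  have hn₃ : 3 ≤ n := by omega
  have hn' : M + 4 * ‖a‖ + 3 ≤ n := by
    have := Nat.le_ceil (M + 4 * ‖a‖)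
    have : ((⌈M + 4 * ‖a‖⌉₊ + 3 : ℕ) : ℝ) ≤ n := by exact_mod_cast hn
    push_cast at this
    linarith
  have hδ : M / n ^ 2 ≤ 1 := by
    rw [div_le_one (by positivity)]
    nlinarith
  have ha' : 4 * ‖a‖ ≤ n := by linarith
  rw [alphaC_eq_Acoef_one_add_tsum hn₃ ha' (hz₁.trans hδ),
    alphaC_eq_Acoef_one_add_tsum hn₃ ha' (hz₂.trans hδ)]
  calc _ = ‖(Acoef a n z₁ 1 - Acoef a n z₂ 1 + (z₁ - z₂) * a ^ 2 / (8 * (n : ℂ) ^ 2))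
        + (∑' p, Acoef a n z₁ (p + 3) - ∑' p, Acoef a n z₂ (p + 3))‖ := by congr 1; ring
    _ ≤ ‖a‖ ^ 2 * ‖z₁ - z₂‖ * (1 / n ^ 4 + M / n ^ 2 / n ^ 3)
        + 32 * ‖a‖ ^ 4 * ‖z₁ - z₂‖ / n ^ 4 :=
      norm_add_le_of_le (norm_Acoef_one_sub_add_le hn₃ hδ hz₁ hz₂)
        (norm_tsum_Acoef_sub_le hn₃ ha' (hz₁.trans hδ) (hz₂.trans hδ))
    _ = ‖a‖ ^ 2 * (1 + M / n + 32 * ‖a‖ ^ 2) * ‖z₁ - z₂‖ / n ^ 4 := by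
        field_simp
    _ ≤ _ := by
        gcongr
        exact div_le_self hM.le (by linarith)
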